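/- arXiv:1908.01706 — 16 statements merged into one kernel-verified Lean document; each statement's English description precedes it below -/
import Mathlib

section
/- Let K̃, L̃, K̂, L̂, C̃, Ĉ ∈ ℂ and set A = C̃ − L̃ + L̂, B = Ĉ − K̂ + K̃, P = C̃K̂ + L̃K̂ − L̃K̃, Q = L̃Ĉ + L̃K̂ − L̂K̂, G = C̃K̂ + L̃K̂ + L̃Ĉ − L̂K̃ + C̃Ĉ. Define the map Φ(u,v) = (U,V) with U = (C̃uv + Pu + L̂Av − AG)/(uv + K̃(u − C̃) + L̃(v − Ĉ) − C̃Ĉ) and V = (Ĉuv + Qv + K̃Bu − BG)/(uv + K̂(u − C̃) + L̂(v − Ĉ) − C̃Ĉ). If u, v ∈ ℂ are such that both denominators uv + K̃(u − C̃) + L̃(v − Ĉ) − C̃Ĉ and uv + K̂(u − C̃) + L̂(v − Ĉ) − C̃Ĉ are nonzero at (u,v), and the corresponding two denominators are also nonzero at (U,V), then Φ(U,V) = (u,v), i.e. the map Φ is an involution. -/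
/-- Proposition 2.1 ('if' direction): the map (M1) is an involution. -/
theorem stmt_0 (Kt Lt Kh Lh Ct Ch u v U V A B P Q G : ℂ)
    (hA : A = Ct - Lt + Lh) (hB : B = Ch - Kh + Kt)
    (hP : P = Ct * Kh + Lt * Kh - Lt * Kt)
    (hQ : Q = Lt * Ch + Lt * Kh - Lh * Kh)
    (hG : G = Ct * Kh + Lt * Kh + Lt * Ch - Lh * Kt + Ct * Ch)
    (hd1 : u * v + Kt * (u - Ct) + Lt * (v - Ch) - Ct * Ch ≠ 0)
    (hd2 : u * v + Kh * (u - Ct) + Lh * (v - Ch) - Ct * Ch ≠ 0)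
    (hU : U = (Ct * u * v + P * u + Lh * A * v - A * G) /
      (u * v + Kt * (u - Ct) + Lt * (v - Ch) - Ct * Ch))
    (hV : V = (Ch * u * v + Q * v + Kt * B * u - B * G) /
      (u * v + Kh * (u - Ct) + Lh * (v - Ch) - Ct * Ch))
    (hD1 : U * V + Kt * (U - Ct) + Lt * (V - Ch) - Ct * Ch ≠ 0)
    (hD2 : U * V + Kh * (U - Ct) + Lh * (V - Ch) - Ct * Ch ≠ 0) :
    (Ct * U * V + P * U + Lh * A * V - A * G) /
      (U * V + Kt * (U - Ct) + Lt * (V - Ch) - Ct * Ch) = u ∧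
    (Ch * U * V + Q * V + Kt * B * U - B * G) /
      (U * V + Kh * (U - Ct) + Lh * (V - Ch) - Ct * Ch) = v := by
  subst hA hB hP hQ hG
  set d1 : ℂ := u * v + Kt * (u - Ct) + Lt * (v - Ch) - Ct * Ch with hd1def
  set d2 : ℂ := u * v + Kh * (u - Ct) + Lh * (v - Ch) - Ct * Ch with hd2def
  set n1 : ℂ := Ct * u * v + (Ct * Kh + Lt * Kh - Lt * Kt) * u +
    Lh * (Ct - Lt + Lh) * v -
    (Ct - Lt + Lh) * (Ct * Kh + Lt * Kh + Lt * Ch - Lh * Kt + Ct * Ch) with hn1def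
  set n2 : ℂ := Ch * u * v + (Lt * Ch + Lt * Kh - Lh * Kh) * v +
    Kt * (Ch - Kh + Kt) * u -
    (Ch - Kh + Kt) * (Ct * Kh + Lt * Kh + Lt * Ch - Lh * Kt + Ct * Ch) with hn2def
  have hU' : U * d1 = n1 := by rw [hU, div_mul_cancel₀ _ hd1]
  have hV' : V * d2 = n2 := by rw [hV, div_mul_cancel₀ _ hd2]
  constructor
  · rw [div_eq_iff hD1]
    refine mul_left_cancel₀ (mul_ne_zero hd1 hd2) ?_
    linear_combination (((Ct - u) * V * d2 +
        ((Ct * Kh + Lt * Kh - Lt * Kt) - u * Kt) * d2) * hU' +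
      ((Ct - u) * n1 + (Lh * (Ct - Lt + Lh) - u * Lt) * d1) * hV')
  · rw [div_eq_iff hD2]
    refine mul_left_cancel₀ (mul_ne_zero hd1 hd2) ?_
    linear_combination (((Ch - v) * V * d2 +
        (Kt * (Ch - Kh + Kt) - v * Kh) * d2) * hU' +
      ((Ch - v) * n1 + ((Lt * Ch + Lt * Kh - Lh * Kh) - v * Lh) * d1) * hV')
end

section
/- Let λ, u, v ∈ ℂ with u ≠ 0 and v ≠ 0, and define U = v + λ(1 − v/u) and V = u + λ(u/v − 1) (the Hirota KdV map). If moreover U ≠ 0 and V ≠ 0, then V + λ(1 − V/U) = u and U + λ(U/V − 1) = v; that is, applying the map again to (U,V) returns (u,v), so the Hirota KdV map is an involution. -/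
/-!
Writing `D = u v + λ (u - v)`, the map sends `(u, v)` to `(D / u, D / v)`, and it sends any pair
`(D / u, D / v)` to `((D - λ (u - v)) / v, (D - λ (u - v)) / u)`. Since `D - λ (u - v) = u v`,
applying it twice returns `(u, v)` as soon as `D ≠ 0`.
-/

variable {K : Type*} [Field K]

def hirotaKdV (lam : K) (p : K × K) : K × K :=
  (p.2 + lam * (1 - p.2 / p.1), p.1 + lam * (p.1 / p.2 - 1))

lemma hirotaKdV_eq_div (lam : K) {u v : K} (hu : u ≠ 0) (hv : v ≠ 0) :
    hirotaKdV lam (u, v) = ((u * v + lam * (u - v)) / u, (u * v + lam * (u - v)) / v) := by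
  simp only [hirotaKdV, Prod.mk.injEq]
  constructor <;> field_simp

lemma hirotaKdV_div_div (lam : K) {u v D : K} (hu : u ≠ 0) (hv : v ≠ 0) (hD : D ≠ 0) :
    hirotaKdV lam (D / u, D / v) = ((D - lam * (u - v)) / v, (D - lam * (u - v)) / u) := by
  simp only [hirotaKdV, Prod.mk.injEq]
  constructor <;> field_simp <;> ring

theorem hirotaKdV_hirotaKdV (lam : K) {u v : K} (hu : u ≠ 0) (hv : v ≠ 0)
    (hU : (hirotaKdV lam (u, v)).1 ≠ 0) : hirotaKdV lam (hirotaKdV lam (u, v)) = (u, v) := by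
  rw [hirotaKdV_eq_div lam hu hv] at hU ⊢
  have hD : u * v + lam * (u - v) ≠ 0 := (div_ne_zero_iff.1 hU).1
  rw [hirotaKdV_div_div lam hu hv hD, add_sub_cancel_right, mul_div_cancel_left₀ v hu,
    mul_div_cancel_right₀ u hv]

theorem stmt_1_general (lam u v U V : ℂ) (hu : u ≠ 0) (hv : v ≠ 0)
    (hU : U = v + lam * (1 - v / u)) (hV : V = u + lam * (u / v - 1))
    (hU0 : U ≠ 0) :
    V + lam * (1 - V / U) = u ∧ U + lam * (U / V - 1) = v := by
  subst hU hV
  simpa only [hirotaKdV, Prod.mk.injEq] using hirotaKdV_hirotaKdV lam hu hv hU0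

/-- The Hirota KdV map is an involution. -/
theorem stmt_1 (lam u v U V : ℂ) (hu : u ≠ 0) (hv : v ≠ 0)
    (hU : U = v + lam * (1 - v / u)) (hV : V = u + lam * (u / v - 1))
    (hU0 : U ≠ 0) (hV0 : V ≠ 0) :
    V + lam * (1 - V / U) = u ∧ U + lam * (U / V - 1) = v :=
  stmt_1_general lam u v U V hu hv hU hV hU0
end

section
/- Let λ, u, v ∈ ℂ with u ≠ 0, v ≠ 0 and λ ≠ 0, and define U = v + λ(1 − v/u) and V = u + λ(u/v − 1) (the Hirota KdV map). Then λ + V − u ≠ 0, and U = λV/(λ + V − u) and v = λu/(λ + V − u). In other words, the companion map of the Hirota KdV map, i.e. the map (u, V) ↦ (U, v), is given by the formulas (x, y) ↦ (λy/(λ + y − x), λx/(λ + y − x)). -/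
/-- The companion map of the Hirota KdV map is given by
    (x, y) ↦ (λy/(λ + y − x), λx/(λ + y − x)). -/
theorem stmt_2 (lam u v U V : ℂ) (hu : u ≠ 0) (hv : v ≠ 0) (hlam : lam ≠ 0)
    (hU : U = v + lam * (1 - v / u)) (hV : V = u + lam * (u / v - 1)) :
    lam + V - u ≠ 0 ∧ U = lam * V / (lam + V - u) ∧ v = lam * u / (lam + V - u) := by
  have key : lam + V - u = lam * u / v := by
    rw [hV]; field_simp; ring
  have hne : lam + V - u ≠ 0 := by
    rw [key]; exact div_ne_zero (mul_ne_zero hlam hu) hv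
  refine ⟨hne, ?_, ?_⟩
  · rw [hU, key, hV]; field_simp
  · rw [key]; field_simp
end

section
/- Let λ, u, v ∈ ℂ with λ ≠ 0 and λ + v − u ≠ 0, and define U = λv/(λ + v − u) and V = λu/(λ + v − u). Then λ + V − U ≠ 0, and λV/(λ + V − U) = u and λU/(λ + V − U) = v; that is, the map (u,v) ↦ (λv/(λ + v − u), λu/(λ + v − u)) is an involution. -/
/-- The companion map of the Hirota KdV map is an involution. -/
theorem stmt_3 (lam u v U V : ℂ) (hlam : lam ≠ 0) (hden : lam + v - u ≠ 0)
    (hU : U = lam * v / (lam + v - u)) (hV : V = lam * u / (lam + v - u)) :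
    lam + V - U ≠ 0 ∧ lam * V / (lam + V - U) = u ∧ lam * U / (lam + V - U) = v := by
  have key : lam + V - U = lam * lam / (lam + v - u) := by
    rw [hU, hV]; field_simp; ring
  have hne : lam + V - U ≠ 0 := by
    rw [key]; exact div_ne_zero (mul_ne_zero hlam hlam) hden
  refine ⟨hne, ?_, ?_⟩
  · rw [key, hV]; field_simp
  · rw [key, hU]; field_simp
end

section
/- Let p, q, u, v ∈ ℂ and set N(u,v) = (1−q)u + q − p + (p−1)v and D(u,v) = q(1−p)u + p(q−1)v + (p−q)uv. Define U = p·v·N(u,v)/D(u,v) and V = q·u·N(u,v)/D(u,v) (the map F_I). If D(u,v) ≠ 0 and D(U,V) ≠ 0, then p·V·N(U,V)/D(U,V) = u and q·U·N(U,V)/D(U,V) = v; that is, F_I is an involution. -/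
/-- The map F_I is an involution. -/
theorem stmt_4 (p q u v U V : ℂ)
    (hU : U = p * v * ((1 - q) * u + q - p + (p - 1) * v) /
      (q * (1 - p) * u + p * (q - 1) * v + (p - q) * u * v))
    (hV : V = q * u * ((1 - q) * u + q - p + (p - 1) * v) /
      (q * (1 - p) * u + p * (q - 1) * v + (p - q) * u * v))
    (hd : q * (1 - p) * u + p * (q - 1) * v + (p - q) * u * v ≠ 0)
    (hD : q * (1 - p) * U + p * (q - 1) * V + (p - q) * U * V ≠ 0) :
    p * V * ((1 - q) * U + q - p + (p - 1) * V) /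
      (q * (1 - p) * U + p * (q - 1) * V + (p - q) * U * V) = u ∧
    q * U * ((1 - q) * U + q - p + (p - 1) * V) /
      (q * (1 - p) * U + p * (q - 1) * V + (p - q) * U * V) = v := by
  set n : ℂ := (1 - q) * u + q - p + (p - 1) * v with hn
  set d : ℂ := q * (1 - p) * u + p * (q - 1) * v + (p - q) * u * v with hdd
  have hU' : U * d = p * v * n := by rw [hU, div_mul_cancel₀ _ hd]
  have hV' : V * d = q * u * n := by rw [hV, div_mul_cancel₀ _ hd]
  constructor
  · rw [div_eq_iff hD]
    apply mul_left_cancel₀ (mul_ne_zero hd hd)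
    linear_combination
      (p * (1 - q) * (V * d) - u * (q * (1 - p) * d + (p - q) * (V * d))) * hU' +
      (p * ((1 - q) * (p * v * n) + (q - p) * d) + p * (p - 1) * (V * d + q * u * n)
        - u * (p * (q - 1) * d + (p - q) * (p * v * n))) * hV'
  · rw [div_eq_iff hD]
    apply mul_left_cancel₀ (mul_ne_zero hd hd)
    linear_combination
      (q * ((1 - q) * (U * d + p * v * n) + (q - p) * d + (p - 1) * (V * d))
        - v * (q * (1 - p) * d + (p - q) * (V * d))) * hU' +
      (q * (p * v * n) * (p - 1) - v * (p * (q - 1) * d + (p - q) * (p * v * n))) * hV'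
end

section
/- Let p, q, u, v ∈ ℂ with p ≠ 0, q ≠ 0 and u ≠ v, and define U = (v/p)(pu − qv + q − p)/(u − v) and V = (u/q)(pu − qv + q − p)/(u − v) (the map F_II). If moreover U ≠ V, then (V/p)(pU − qV + q − p)/(U − V) = u and (U/q)(pU − qV + q − p)/(U − V) = v; that is, F_II is an involution. -/
/-- The map F_II is an involution. -/
theorem stmt_5 (p q u v U V : ℂ) (hp : p ≠ 0) (hq : q ≠ 0) (huv : u ≠ v)
    (hU : U = v / p * (p * u - q * v + q - p) / (u - v))
    (hV : V = u / q * (p * u - q * v + q - p) / (u - v))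
    (hUV : U ≠ V) :
    V / p * (p * U - q * V + q - p) / (U - V) = u ∧
    U / q * (p * U - q * V + q - p) / (U - V) = v := by
  have huv' : u - v ≠ 0 := sub_ne_zero.2 huv
  have hUV' : U - V ≠ 0 := sub_ne_zero.2 hUV
  have key : U - V = (q * v - p * u) * (p * u - q * v + q - p) / (p * q * (u - v)) := by
    rw [hU, hV]; field_simp
  constructor
  · rw [div_eq_iff hUV', key, hU, hV]
    field_simp
    ring
  · rw [div_eq_iff hUV', key, hU, hV]
    field_simp
    ring
end

section
/- Let p, q, u, v ∈ ℂ with p ≠ 0, q ≠ 0 and u ≠ v, and define U = (v/p)(pu − qv)/(u − v) and V = (u/q)(pu − qv)/(u − v) (the map F_III). If moreover U ≠ V, then (V/p)(pU − qV)/(U − V) = u and (U/q)(pU − qV)/(U − V) = v; that is, F_III is an involution. -/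
/-!
Put `A = p u - q v` and `D = u - v`. For the image `(U, V)` one finds `p U - q V = -A` and
`U - V = -A² / (p q D)`, so the same formula applied to `(U, V)` gives
`(V / p) (-A) / (U - V) = (u A / (p q D)) · (p q D / A) = u`, and symmetrically `v`.
The condition `U ≠ V` is exactly `A ≠ 0`.
-/

section FIII

variable {K : Type*} [Field K] {p q u v U V : K}

theorem p_mul_sub_q_mul_of_fIII (hp : p ≠ 0) (hq : q ≠ 0) (huv : u ≠ v)
    (hU : U = v / p * (p * u - q * v) / (u - v))
    (hV : V = u / q * (p * u - q * v) / (u - v)) :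
    p * U - q * V = -(p * u - q * v) := by
  have : u - v ≠ 0 := sub_ne_zero.mpr huv
  rw [hU, hV]
  field_simp
  ring

theorem sub_of_fIII (hp : p ≠ 0) (hq : q ≠ 0) (huv : u ≠ v)
    (hU : U = v / p * (p * u - q * v) / (u - v))
    (hV : V = u / q * (p * u - q * v) / (u - v)) :
    U - V = -(p * u - q * v) ^ 2 / (p * q * (u - v)) := by
  have : u - v ≠ 0 := sub_ne_zero.mpr huv
  rw [hU, hV]
  field_simp
  ring

end FIII

/-- The map F_III is an involution. -/
theorem stmt_6 (p q u v U V : ℂ) (hp : p ≠ 0) (hq : q ≠ 0) (huv : u ≠ v)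
    (hU : U = v / p * (p * u - q * v) / (u - v))
    (hV : V = u / q * (p * u - q * v) / (u - v))
    (hUV : U ≠ V) :
    V / p * (p * U - q * V) / (U - V) = u ∧
    U / q * (p * U - q * V) / (U - V) = v := by
  have hD : u - v ≠ 0 := sub_ne_zero.mpr huv
  have hA : p * u - q * v ≠ 0 := by
    rintro hA
    exact hUV (sub_eq_zero.mp (by rw [sub_of_fIII hp hq huv hU hV, hA]; simp))
  rw [p_mul_sub_q_mul_of_fIII hp hq huv hU hV, sub_of_fIII hp hq huv hU hV]
  -- with `A` atomic, `field_simp` cancels it instead of expanding it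
  constructor
  · rw [hV]; generalize p * u - q * v = A at hA ⊢; field_simp
  · rw [hU]; generalize p * u - q * v = A at hA ⊢; field_simp
end

section
/- Let p, q, u, v ∈ ℂ with u ≠ v, and define U = v(1 + (p − q)/(u − v)) and V = u(1 + (p − q)/(u − v)) (the map F_IV). If moreover U ≠ V, then V(1 + (p − q)/(U − V)) = u and U(1 + (p − q)/(U − V)) = v; that is, F_IV is an involution. -/
/-- The map F_IV is an involution. -/
theorem stmt_7 (p q u v U V : ℂ) (huv : u ≠ v)
    (hU : U = v * (1 + (p - q) / (u - v)))
    (hV : V = u * (1 + (p - q) / (u - v)))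
    (hUV : U ≠ V) :
    V * (1 + (p - q) / (U - V)) = u ∧
    U * (1 + (p - q) / (U - V)) = v := by
  have hs : u - v ≠ 0 := sub_ne_zero.mpr huv
  have hkey : u - v + (p - q) ≠ 0 := by
    intro h
    apply hUV
    rw [hU, hV]
    have : (1 : ℂ) + (p - q) / (u - v) = 0 := by
      field_simp
      linear_combination h
    rw [this]; ring
  have hUVd : U - V = -(u - v + (p - q)) := by
    rw [hU, hV]
    field_simp
    ring
  have h1 : (1 : ℂ) + (p - q) / (u - v) = (u - v + (p - q)) / (u - v) := by
    field_simp
  have h2 : (1 : ℂ) + (p - q) / (-(u - v + (p - q))) = (u - v) / (u - v + (p - q)) := by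
    rw [div_neg]
    field_simp
    ring
  rw [hUVd, hU, hV, h1, h2]
  constructor <;> field_simp
end

section
/- Let p, q, u, v ∈ ℂ and set N(u,v) = (1−q)u + q − p + (p−1)v and D(u,v) = q(1−p)u + p(q−1)v + (p−q)uv. Define U = D(u,v)/(v·N(u,v)) and V = D(u,v)/(u·N(u,v)) (the map cH_I). If u ≠ 0, v ≠ 0, N(u,v) ≠ 0, U ≠ 0, V ≠ 0 and N(U,V) ≠ 0, then D(U,V)/(V·N(U,V)) = u and D(U,V)/(U·N(U,V)) = v; that is, cH_I is an involution. -/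
/-- The map cH_I is an involution. -/
theorem stmt_9 (p q u v U V : ℂ)
    (hU : U = (q * (1 - p) * u + p * (q - 1) * v + (p - q) * u * v) /
      (v * ((1 - q) * u + q - p + (p - 1) * v)))
    (hV : V = (q * (1 - p) * u + p * (q - 1) * v + (p - q) * u * v) /
      (u * ((1 - q) * u + q - p + (p - 1) * v)))
    (hu : u ≠ 0) (hv : v ≠ 0) (hN : (1 - q) * u + q - p + (p - 1) * v ≠ 0)
    (hU0 : U ≠ 0) (hV0 : V ≠ 0) (hNN : (1 - q) * U + q - p + (p - 1) * V ≠ 0) :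
    (q * (1 - p) * U + p * (q - 1) * V + (p - q) * U * V) /
      (V * ((1 - q) * U + q - p + (p - 1) * V)) = u ∧
    (q * (1 - p) * U + p * (q - 1) * V + (p - q) * U * V) /
      (U * ((1 - q) * U + q - p + (p - 1) * V)) = v := by
  have h1 : U * (v * ((1 - q) * u + q - p + (p - 1) * v))
      = q * (1 - p) * u + p * (q - 1) * v + (p - q) * u * v := by
    rw [hU, div_mul_cancel₀ _ (mul_ne_zero hv hN)]
  have h2 : V * (u * ((1 - q) * u + q - p + (p - 1) * v))
      = q * (1 - p) * u + p * (q - 1) * v + (p - q) * u * v := by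
    rw [hV, div_mul_cancel₀ _ (mul_ne_zero hu hN)]
  have hc : u^2 * v^2 * ((1 - q) * u + q - p + (p - 1) * v)^2 ≠ 0 :=
    mul_ne_zero (mul_ne_zero (pow_ne_zero 2 hu) (pow_ne_zero 2 hv)) (pow_ne_zero 2 hN)
  constructor
  · rw [div_eq_iff (mul_ne_zero hV0 hNN)]
    apply mul_left_cancel₀ hc
    linear_combination (norm := ring_nf)
      ((1)*u^3*v^2*V + (-1)*u^4*v*V + (-1)*q*u^2*v^2 + (1)*q*u^2*v^2*V + (1)*q*u^3*v + (-2)*q*u^3*v*V + (-1)*q*u^3*v^2*V + (2)*q*u^4*v*V + (1)*q^2*u^2*v + (-1)*q^2*u^2*v*V + (-1)*q^2*u^3*v + (2)*q^2*u^3*v*V + (-1)*q^2*u^4*v*V + (-1)*p*u^2*v^2*V + (2)*p*u^3*v*V + (-1)*p*u^3*v^2*V + (-1)*p*q*u^2*v + (2)*p*q*u^2*v*V + (2)*p*q*u^2*v^2 + (-1)*p*q*u^2*v^2*V + (-1)*p*q*u^3*v + (-2)*p*q*u^3*v*V + (1)*p*q*u^3*v^2*V + (-1)*p*q^2*u^2*v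 + (1)*p*q^2*u^3*v + (-1)*p^2*u^2*v*V + (1)*p^2*u^2*v^2*V + (1)*p^2*q*u^2*v + (-1)*p^2*q*u^2*v^2) * h1 + ((-1)*u^2*v^3*V + (1)*u^3*v^2*V + (1)*q*u^2*v^2 + (1)*q*u^2*v^2*V + (-1)*q*u^3*v + (-1)*q*u^3*v^2*V + (-1)*q^2*u^2*v + (1)*q^2*u^3*v + (-1)*p*u^2*v^2*V + (2)*p*u^2*v^3*V + (-1)*p*u^3*v^2*V + (1)*p*q*u^2*v + (-2)*p*q*u^2*v^2 + (-1)*p*q*u^2*v^2*V + (1)*p*q*u^3*v + (1)*p*q*u^3*v^2*V + (1)*p*q^2*u^2*v + (-1)*p*q^2*u^3*v + (1)*p^2*u^2*v^2*V + (-1)*p^2*u^2*v^3*V + (-1)*p^2*q*u^2*v + (1)*p^2*q*u^2*v^2) * h2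
  · rw [div_eq_iff (mul_ne_zero hU0 hNN)]
    apply mul_left_cancel₀ hc
    linear_combination (norm := ring_nf)
      ((-1)*u^2*v^3*V + (1)*u^2*v^3*U + (1)*u^3*v^2*V + (-1)*u^3*v^2*U + (-1)*q*u^2*v^2 + (2)*q*u^2*v^2*V + (-1)*q*u^2*v^2*U + (1)*q*u^2*v^3 + (-1)*q*u^2*v^3*U + (-1)*q*u^3*v*V + (-1)*q*u^3*v^2*V + (2)*q*u^3*v^2*U + (1)*q^2*u^2*v + (-1)*q^2*u^2*v*V + (-1)*q^2*u^2*v^2 + (1)*q^2*u^2*v^2*U + (1)*q^2*u^3*v*V + (-1)*q^2*u^3*v^2*U + (1)*p*u^2*v^2 + (-2)*p*u^2*v^2*V + (1)*p*u^2*v^2*U + (-1)*p*u^2*v^3 + (2)*p*u^2*v^3*V + (-1)*p*u^2*v^3*U + (1)*p*u^3*v*V + (-1)*p*u^3*v^2*V + (-1)*p*q*u^2*v + (2)*p*q*u^2*v*V + (2)*p*q*u^2*v^2 + (-2)*p*q*u^2*v^2*V + (-1)*p*q*u^2*v^2*U + (-1)*p*q*u^2*v^3 + (1)*p*q*u^2*v^3*U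 + (-1)*p*q*u^3*v*V + (1)*p*q*u^3*v^2*V + (-1)*p*q^2*u^2*v + (1)*p*q^2*u^2*v^2 + (-1)*p^2*u^2*v*V + (-1)*p^2*u^2*v^2 + (2)*p^2*u^2*v^2*V + (1)*p^2*u^2*v^3 + (-1)*p^2*u^2*v^3*V + (1)*p^2*q*u^2*v + (-1)*p^2*q*u^2*v^2) * h1 + ((1)*q*u^2*v^2 + (-1)*q*u^2*v^3 + (-1)*q^2*u^2*v + (1)*q^2*u^2*v^2 + (-1)*p*u^2*v^2 + (1)*p*u^2*v^3 + (1)*p*q*u^2*v + (-2)*p*q*u^2*v^2 + (1)*p*q*u^2*v^3 + (1)*p*q^2*u^2*v + (-1)*p*q^2*u^2*v^2 + (1)*p^2*u^2*v^2 + (-1)*p^2*u^2*v^3 + (-1)*p^2*q*u^2*v + (1)*p^2*q*u^2*v^2) * h2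
end

section
/- Let p, q, u, v ∈ ℂ with p ≠ 0, q ≠ 0 and u ≠ v, and define U = ((1 − v)/p)(pu − qv)/(u − v) and V = ((1 − u)/q)(pu − qv)/(u − v) (the map cH_II). If moreover U ≠ V, then ((1 − V)/p)(pU − qV)/(U − V) = u and ((1 − U)/q)(pU − qV)/(U − V) = v; that is, cH_II is an involution. -/
/-!
With `A = p u - q v` and `D = q (1 - v) - p (1 - u)`, the quantity `A` is invariant:
`p U - q V = A`. Moreover `1 - V`, `1 - U` and `U - V` all factor through `D`, namely
`1 - V = u D / (q (u - v))`, `1 - U = v D / (p (u - v))` and `U - V = A D / (p q (u - v))`.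
After multiplying out the nonzero denominator `U - V`, both identities are polynomial.
-/

namespace CHII

variable {K : Type*} [Field K] {p q u v : K}

def fst (p q u v : K) : K := (1 - v) / p * (p * u - q * v) / (u - v)

def snd (p q u v : K) : K := (1 - u) / q * (p * u - q * v) / (u - v)

theorem mul_fst_sub_mul_snd (hp : p ≠ 0) (hq : q ≠ 0) (huv : u ≠ v) :
    p * fst p q u v - q * snd p q u v = p * u - q * v := by
  have : u - v ≠ 0 := sub_ne_zero.mpr huv
  unfold fst snd
  field_simp
  ring

theorem fst_sub_snd (hp : p ≠ 0) (hq : q ≠ 0) :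
    fst p q u v - snd p q u v =
      (p * u - q * v) * (q * (1 - v) - p * (1 - u)) / (p * q * (u - v)) := by
  unfold fst snd
  field_simp

theorem one_sub_snd (hq : q ≠ 0) (huv : u ≠ v) :
    1 - snd p q u v = u * (q * (1 - v) - p * (1 - u)) / (q * (u - v)) := by
  have : u - v ≠ 0 := sub_ne_zero.mpr huv
  unfold snd
  field_simp
  ring

theorem one_sub_fst (hp : p ≠ 0) (huv : u ≠ v) :
    1 - fst p q u v = v * (q * (1 - v) - p * (1 - u)) / (p * (u - v)) := by
  have : u - v ≠ 0 := sub_ne_zero.mpr huv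
  unfold fst
  field_simp
  ring

theorem fst_fst_snd (hp : p ≠ 0) (hq : q ≠ 0) (huv : u ≠ v)
    (h : fst p q u v ≠ snd p q u v) :
    fst p q (fst p q u v) (snd p q u v) = u := by
  have : u - v ≠ 0 := sub_ne_zero.mpr huv
  rw [fst, div_eq_iff (sub_ne_zero.mpr h), mul_fst_sub_mul_snd hp hq huv,
    fst_sub_snd hp hq, one_sub_snd hq huv]
  field_simp

theorem snd_fst_snd (hp : p ≠ 0) (hq : q ≠ 0) (huv : u ≠ v)
    (h : fst p q u v ≠ snd p q u v) :
    snd p q (fst p q u v) (snd p q u v) = v := by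
  have : u - v ≠ 0 := sub_ne_zero.mpr huv
  rw [snd, div_eq_iff (sub_ne_zero.mpr h), mul_fst_sub_mul_snd hp hq huv,
    fst_sub_snd hp hq, one_sub_fst hp huv]
  field_simp

end CHII

/-- The map cH_II is an involution. -/
theorem stmt_10 (p q u v U V : ℂ) (hp : p ≠ 0) (hq : q ≠ 0) (huv : u ≠ v)
    (hU : U = (1 - v) / p * (p * u - q * v) / (u - v))
    (hV : V = (1 - u) / q * (p * u - q * v) / (u - v))
    (hUV : U ≠ V) :
    (1 - V) / p * (p * U - q * V) / (U - V) = u ∧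
    (1 - U) / q * (p * U - q * V) / (U - V) = v := by
  subst hU hV
  exact ⟨CHII.fst_fst_snd hp hq huv hUV, CHII.snd_fst_snd hp hq huv hUV⟩
end

section
/- Let p, q, u, v ∈ ℂ with p ≠ 0, q ≠ 0, u ≠ 0, v ≠ 0, u ≠ v and pu − qv ≠ 0, and define U = (v/p)(pu − qv)/(u − v) and V = (u/q)(pu − qv)/(u − v) (the map F_III). Then U ≠ 0 and V ≠ 0, and −1/(pU) = −(1/v)(u − v)/(pu − qv) and −1/(qV) = −(1/u)(u − v)/(pu − qv); hence the change of variables (U,V,u,v) ↦ (−1/(pU), −1/(qV), u, v) transforms the map F_III into the map cH_III^B with the same parameters (p,q). -/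
theorem one_div_mul_div_mul_div {K : Type*} [Field K] {p : K} (hp : p ≠ 0) (v w d : K) :
    1 / (p * (v / p * w / d)) = 1 / v * (d / w) := by
  rw [mul_div_assoc, ← mul_assoc, mul_div_cancel₀ v hp, div_mul_eq_div_div, div_eq_mul_inv _ (w / d), inv_div]

/-- The change (U,V,u,v) ↦ (−1/(pU), −1/(qV), u, v) transforms F_III into cH_III^B. -/
theorem stmt_13 (p q u v U V : ℂ) (hp : p ≠ 0) (hq : q ≠ 0)
    (hu : u ≠ 0) (hv : v ≠ 0) (huv : u ≠ v) (hpq : p * u - q * v ≠ 0)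
    (hU : U = v / p * (p * u - q * v) / (u - v))
    (hV : V = u / q * (p * u - q * v) / (u - v)) :
    U ≠ 0 ∧ V ≠ 0 ∧
    -(1 / (p * U)) = -(1 / v) * ((u - v) / (p * u - q * v)) ∧
    -(1 / (q * V)) = -(1 / u) * ((u - v) / (p * u - q * v)) := by
  have hd : u - v ≠ 0 := sub_ne_zero.mpr huv
  subst hU hV
  refine ⟨div_ne_zero (mul_ne_zero (div_ne_zero hv hp) hpq) hd,
    div_ne_zero (mul_ne_zero (div_ne_zero hu hq) hpq) hd, ?_, ?_⟩
  · rw [one_div_mul_div_mul_div hp, neg_mul]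
  · rw [one_div_mul_div_mul_div hq, neg_mul]
end

section
/- Let p, q, u, v ∈ ℂ with p ≠ 0, q ≠ 0 and u ≠ v, and define U = (v/p)(pu − qv + q − p)/(u − v) and V = (u/q)(pu − qv + q − p)/(u − v) (the map F_II). Then 1 − U = ((1 − v)/p)(pu − qv)/(u − v) and 1 − V = ((1 − u)/q)(pu − qv)/(u − v); hence the change of variables (U,V,u,v) ↦ (1 − U, 1 − V, u, v) transforms the map F_II into the map cH_II with the same parameters (p,q). -/
/-- The change (U,V,u,v) ↦ (1−U, 1−V, u, v) transforms F_II into cH_II. -/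
theorem stmt_15 (p q u v U V : ℂ) (hp : p ≠ 0) (hq : q ≠ 0) (huv : u ≠ v)
    (hU : U = v / p * (p * u - q * v + q - p) / (u - v))
    (hV : V = u / q * (p * u - q * v + q - p) / (u - v)) :
    1 - U = (1 - v) / p * (p * u - q * v) / (u - v) ∧
    1 - V = (1 - u) / q * (p * u - q * v) / (u - v) := by
  have h : u - v ≠ 0 := sub_ne_zero.mpr huv
  subst hU hV
  constructor <;> field_simp <;> ring
end

section
/- Let p, q, u, v ∈ ℂ with u ≠ v, and define U = v + (p − q)/(u − v) and V = u + (p − q)/(u − v) (the map F_V). Then for all a, b, c ∈ ℂ, the function I(u,v) = a(u − v) + b(u² + p − v² − q) + c(u³ + 3pu − v³ − 3qv) satisfies I(U,V) = −I(u,v); in particular the three relations U − V = −(u − v), U² + p − V² − q = −(u² + p − v² − q), and U³ + 3pU − V³ − 3qV = −(u³ + 3pu − v³ − 3qv) hold, i.e. these are alternating invariants with separated variables of the map F_V. -/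
/-- Alternating invariants with separated variables of the map F_V. -/
theorem stmt_16 (p q u v U V : ℂ) (huv : u ≠ v)
    (hU : U = v + (p - q) / (u - v))
    (hV : V = u + (p - q) / (u - v)) :
    (∀ a b c : ℂ,
      a * (U - V) + b * (U ^ 2 + p - V ^ 2 - q) +
        c * (U ^ 3 + 3 * p * U - V ^ 3 - 3 * q * V) =
      -(a * (u - v) + b * (u ^ 2 + p - v ^ 2 - q) +
        c * (u ^ 3 + 3 * p * u - v ^ 3 - 3 * q * v))) ∧
    U - V = -(u - v) ∧
    U ^ 2 + p - V ^ 2 - q = -(u ^ 2 + p - v ^ 2 - q) ∧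
    U ^ 3 + 3 * p * U - V ^ 3 - 3 * q * V =
      -(u ^ 3 + 3 * p * u - v ^ 3 - 3 * q * v) := by
  have hne : u - v ≠ 0 := sub_ne_zero.mpr huv
  set w : ℂ := (p - q) / (u - v) with hw_def
  have hw : w * (u - v) = p - q := div_mul_cancel₀ _ hne
  have h1 : U - V = -(u - v) := by rw [hU, hV]; ring
  have h2 : U ^ 2 + p - V ^ 2 - q = -(u ^ 2 + p - v ^ 2 - q) := by
    rw [hU, hV]; linear_combination (-2 : ℂ) * hw
  have h3 : U ^ 3 + 3 * p * U - V ^ 3 - 3 * q * V =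
      -(u ^ 3 + 3 * p * u - v ^ 3 - 3 * q * v) := by
    rw [hU, hV]; linear_combination (-3 * (u + v) - 3 * w) * hw
  exact ⟨fun a b c => by rw [h1, h2, h3]; ring, h1, h2, h3⟩
end

section
/- Let p, q, u, v ∈ ℂ and set N(u,v) = (1−q)u + q − p + (p−1)v and D(u,v) = q(1−p)u + p(q−1)v + (p−q)uv. Suppose D(u,v) ≠ 0 and define U = p·v·N(u,v)/D(u,v) and V = q·u·N(u,v)/D(u,v) (the map F_I). Then the following three identities hold: (i) q·u·U = p·v·V; (ii) (q−1)(U−1)(u−1) = (p−1)(V−1)(v−1); (iii) q(q−1)(U−p)(u−p) = p(p−1)(V−q)(v−q). These are the exponentiated forms of the three alternating invariants with separated variables of F_I. -/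
/-!
Writing `F_I(u, v) = (U, V)` with `U = p v N / D`, the map is symmetric under
`(p, q, u, v) ↦ (q, p, v, u)` (both `N` and `D` change sign), so `V` is `U` with the roles
swapped. Each invariant then follows from a factorization of `U - 1` and `U - p`:
`D (U - 1) = (1 - p)(v - 1)(q u - p v)` and `D (U - p) = p (1 - p)(v - q)(u - v)`.
Multiplying by the swapped factorization of `V - 1`, resp. `V - q`, the two sides agree.
-/

namespace FI

variable {K : Type*} [Field K] (p q u v : K)

def num : K := (1 - q) * u + q - p + (p - 1) * v

def den : K := q * (1 - p) * u + p * (q - 1) * v + (p - q) * u * v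

lemma num_swap : num q p v u = -num p q u v := by unfold num; ring

lemma den_swap : den q p v u = -den p q u v := by unfold den; ring

/-- The first coordinate `U` of `F_I`; the second one is `fst q p v u` (`snd_eq_fst_swap`). -/
def fst : K := p * v * num p q u v / den p q u v

lemma snd_eq_fst_swap : q * u * num p q u v / den p q u v = fst q p v u := by
  rw [fst, num_swap, den_swap, mul_neg, neg_div_neg_eq]

variable {p q u v}

lemma fst_sub_one (h : den p q u v ≠ 0) :
    fst p q u v - 1 = (1 - p) * (v - 1) * (q * u - p * v) / den p q u v := by
  rw [fst, div_sub_one h]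
  congr 1
  unfold num den
  ring

lemma fst_sub_left (h : den p q u v ≠ 0) :
    fst p q u v - p = p * (1 - p) * (v - q) * (u - v) / den p q u v := by
  rw [fst, div_sub' h]
  congr 1
  unfold num den
  ring

end FI

/-- Exponentiated alternating invariants with separated variables of the map F_I. -/
theorem stmt_17 (p q u v U V : ℂ)
    (hD : q * (1 - p) * u + p * (q - 1) * v + (p - q) * u * v ≠ 0)
    (hU : U = p * v * ((1 - q) * u + q - p + (p - 1) * v) /
      (q * (1 - p) * u + p * (q - 1) * v + (p - q) * u * v))
    (hV : V = q * u * ((1 - q) * u + q - p + (p - 1) * v) /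
      (q * (1 - p) * u + p * (q - 1) * v + (p - q) * u * v)) :
    q * u * U = p * v * V ∧
    (q - 1) * (U - 1) * (u - 1) = (p - 1) * (V - 1) * (v - 1) ∧
    q * (q - 1) * (U - p) * (u - p) = p * (p - 1) * (V - q) * (v - q) := by
  have hD' : FI.den q p v u ≠ 0 := by rw [FI.den_swap]; exact neg_ne_zero.2 hD
  have hU' : U = FI.fst p q u v := hU
  have hV' : V = FI.fst q p v u := hV.trans (FI.snd_eq_fst_swap p q u v)
  refine ⟨by rw [hU, hV]; ring, ?_, ?_⟩
  · rw [hU', hV', FI.fst_sub_one hD, FI.fst_sub_one hD', FI.den_swap]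
    ring
  · rw [hU', hV', FI.fst_sub_left hD, FI.fst_sub_left hD', FI.den_swap]
    ring
end

section
/- Let p, q, u, v ∈ ℂ with p ≠ 0, q ≠ 0, u ≠ 0, v ≠ 0, u ≠ v and pu − qv ≠ 0, and define U = (v/p)(pu − qv)/(u − v) and V = (u/q)(pu − qv)/(u − v) (the map F_III). Then U ≠ 0, V ≠ 0, and the following three identities hold: (i) p·u·U = q·v·V; (ii) 1/U − 1/V = −(1/u − 1/v); (iii) pU − qV = −(pu − qv). These are the three alternating invariants with separated variables of F_III (the first in exponentiated form). -/
/-!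
Both components of `F_III` are multiples of `w = (p u - q v) / (u - v)`, namely `p U = v w` and
`q V = u w`. Hence `p u U = u v w = q v V` and `p U - q V = (v - u) w = -(p u - q v)`, while
`1/U - 1/V = (p/v - q/u)/w = (p u - q v)/(u v w) = (u - v)/(u v)`.
-/

namespace FIII

variable {K : Type*} [Field K] {p q u v w U V : K}

theorem ne_zero_of_mul_eq (hU : p * U = v * w) (hv : v ≠ 0) (hw : w ≠ 0) : U ≠ 0 :=
  right_ne_zero_of_mul (hU ▸ mul_ne_zero hv hw)

theorem mul_mul_eq (hU : p * U = v * w) (hV : q * V = u * w) : p * u * U = q * v * V := by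
  linear_combination u * hU - v * hV

theorem sub_eq_neg (hU : p * U = v * w) (hV : q * V = u * w) (hw : (u - v) * w = p * u - q * v) :
    p * U - q * V = -(p * u - q * v) := by
  linear_combination hU - hV - hw

theorem one_div_sub_one_div (hU : p * U = v * w) (hV : q * V = u * w)
    (hw : (u - v) * w = p * u - q * v) (hu : u ≠ 0) (hv : v ≠ 0) (hw₀ : w ≠ 0) :
    1 / U - 1 / V = -(1 / u - 1 / v) := by
  have hU₀ := ne_zero_of_mul_eq hU hv hw₀
  have hV₀ := ne_zero_of_mul_eq hV hu hw₀
  field_simp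
  refine mul_left_cancel₀ hw₀ ?_
  linear_combination -(U * V) * hw - u * V * hU + v * U * hV

end FIII

/-- Alternating invariants with separated variables of the map F_III. -/
theorem stmt_18 (p q u v U V : ℂ) (hp : p ≠ 0) (hq : q ≠ 0)
    (hu : u ≠ 0) (hv : v ≠ 0) (huv : u ≠ v) (hpq : p * u - q * v ≠ 0)
    (hU : U = v / p * (p * u - q * v) / (u - v))
    (hV : V = u / q * (p * u - q * v) / (u - v)) :
    U ≠ 0 ∧ V ≠ 0 ∧
    p * u * U = q * v * V ∧
    1 / U - 1 / V = -(1 / u - 1 / v) ∧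
    p * U - q * V = -(p * u - q * v) := by
  have huv' : u - v ≠ 0 := sub_ne_zero.mpr huv
  set w := (p * u - q * v) / (u - v)
  have hw₀ : w ≠ 0 := div_ne_zero hpq huv'
  have hw : (u - v) * w = p * u - q * v := mul_div_cancel₀ _ huv'
  have hpU : p * U = v * w := by rw [hU, mul_div_assoc, ← mul_assoc, mul_div_cancel₀ _ hp]
  have hqV : q * V = u * w := by rw [hV, mul_div_assoc, ← mul_assoc, mul_div_cancel₀ _ hq]
  exact ⟨FIII.ne_zero_of_mul_eq hpU hv hw₀, FIII.ne_zero_of_mul_eq hqV hu hw₀,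
    FIII.mul_mul_eq hpU hqV, FIII.one_div_sub_one_div hpU hqV hw hu hv hw₀,
    FIII.sub_eq_neg hpU hqV hw⟩
end

section
/- Let p, q, u, v ∈ ℂ with u ≠ v, and define U = −v + (p − q)/(u − v) and V = −u + (p − q)/(u − v) (the map cH_V). Then the following three identities hold: (i) U − V = u − v; (ii) U² − p − V² + q = −(u² − p − v² + q); (iii) U³ − 3pU − V³ + 3qV = u³ − 3pu − v³ + 3qv. Thus (i) and (iii) are invariants and (ii) is an alternating invariant with separated variables of the map cH_V. -/
/-- Invariants and alternating invariants with separated variables of the map cH_V. -/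
theorem stmt_19 (p q u v U V : ℂ) (huv : u ≠ v)
    (hU : U = -v + (p - q) / (u - v))
    (hV : V = -u + (p - q) / (u - v)) :
    U - V = u - v ∧
    U ^ 2 - p - V ^ 2 + q = -(u ^ 2 - p - v ^ 2 + q) ∧
    U ^ 3 - 3 * p * U - V ^ 3 + 3 * q * V =
      u ^ 3 - 3 * p * u - v ^ 3 + 3 * q * v := by
  have h : u - v ≠ 0 := sub_ne_zero.mpr huv
  set w : ℂ := (p - q) / (u - v) with hw
  have key : w * (u - v) = p - q := div_mul_cancel₀ _ h
  subst hU hV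
  refine ⟨by ring, by linear_combination 2 * key,
    by linear_combination (3 * w - 3 * (u + v)) * key⟩
end
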